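/- Let V = V₁ ⊕ V₂ be a direct sum of finite-dimensional real vector spaces. Let a be an alternating bilinear form on V such that a(v₁, v₂) = 0 for all v₁ ∈ V₁, v₂ ∈ V₂ and such that the restriction of a to V₁ is nondegenerate. Let ω be a nondegenerate alternating bilinear form on V₂, extended to V by zero on V₁ and on cross terms. Then there exists K₀ > 0 such that for all K ≥ K₀ the form a + K·ω on V is nondegenerate. -/

import Mathlib

/-!
Since `a` pairs `V₁ × 0` trivially with `0 × V₂`, the `V₂`-component of a vector in the kernel
of `a + K·ω` lies in the kernel of `a|V₂ + K·ω`, and then its `V₁`-component lies in the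
kernel of `a|V₁`. In a basis, `det (a|V₂ + K·ω) = Kⁿ det (ω + K⁻¹·a|V₂)`, which is nonzero
for large `K` because `det ω ≠ 0` and the determinant is continuous.
-/
open Filter Topology

theorem Matrix.eventually_det_add_smul_ne_zero {n : Type*} [Fintype n] [DecidableEq n]
    (M : Matrix n n ℝ) {N : Matrix n n ℝ} (hN : N.det ≠ 0) :
    ∀ᶠ K : ℝ in atTop, (M + K • N).det ≠ 0 := by
  have near_zero : ∀ᶠ t : ℝ in 𝓝 0, (N + t • M).det ≠ 0 := by
    have hcont : Continuous fun t : ℝ => (N + t • M).det := by fun_prop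
    exact hcont.continuousAt.eventually_ne (by simpa using hN)
  filter_upwards [tendsto_inv_atTop_zero.eventually near_zero, eventually_gt_atTop 0]
    with K hK hKpos
  have rescale : M + K • N = K • (N + K⁻¹ • M) := by
    rw [smul_add, smul_smul, mul_inv_cancel₀ hKpos.ne', one_smul, add_comm]
  rw [rescale, Matrix.det_smul]
  exact mul_ne_zero (pow_ne_zero _ hKpos.ne') hK

theorem LinearMap.BilinForm.eventually_nondegenerate_add_smul {V : Type*} [AddCommGroup V]
    [Module ℝ V] [FiniteDimensional ℝ V] (A : LinearMap.BilinForm ℝ V)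
    {B : LinearMap.BilinForm ℝ V} (hB : B.Nondegenerate) :
    ∀ᶠ K : ℝ in atTop, (A + K • B).Nondegenerate := by
  let b := Module.finBasis ℝ V
  rw [nondegenerate_iff_det_ne_zero b] at hB
  simpa only [nondegenerate_iff_det_ne_zero b, map_add, map_smul] using
    (toMatrix b A).eventually_det_add_smul_ne_zero hB

theorem stmt2_general (V₁ V₂ : Type*)
    [AddCommGroup V₁] [Module ℝ V₁] [FiniteDimensional ℝ V₁]
    [AddCommGroup V₂] [Module ℝ V₂] [FiniteDimensional ℝ V₂]
    (a : (V₁ × V₂) →ₗ[ℝ] (V₁ × V₂) →ₗ[ℝ] ℝ)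
    (ha_cross : ∀ (v₁ : V₁) (v₂ : V₂), a (v₁, 0) (0, v₂) = 0)
    (ha_nd : ∀ v₁ : V₁, (∀ w₁ : V₁, a (v₁, 0) (w₁, 0) = 0) → v₁ = 0)
    (ω : V₂ →ₗ[ℝ] V₂ →ₗ[ℝ] ℝ)
    (hω_nd : ∀ v₂ : V₂, (∀ w₂ : V₂, ω v₂ w₂ = 0) → v₂ = 0) :
    ∃ K₀ : ℝ, 0 < K₀ ∧ ∀ K : ℝ, K₀ ≤ K →
      ∀ v : V₁ × V₂, (∀ w : V₁ × V₂, a v w + K * ω v.2 w.2 = 0) → v = 0 := by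
  let a₂ := a.compl₁₂ (LinearMap.inr ℝ V₁ V₂) (LinearMap.inr ℝ V₁ V₂)
  have hω : ω.Nondegenerate := LinearMap.BilinForm.Nondegenerate.ofSeparatingLeft hω_nd
  obtain ⟨K₀, hK₀⟩ := eventually_atTop.mp
    ((LinearMap.BilinForm.eventually_nondegenerate_add_smul a₂ hω).and (eventually_gt_atTop 0))
  refine ⟨K₀, (hK₀ K₀ le_rfl).2, fun K hK v hv => ?_⟩
  obtain ⟨v₁, v₂⟩ := v
  have hv₂ : v₂ = 0 := (hK₀ K hK).1.1 v₂ fun w₂ => by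
    have h := hv (0, w₂)
    rw [show ((v₁, v₂) : V₁ × V₂) = (v₁, 0) + (0, v₂) by simp, map_add,
      LinearMap.add_apply, ha_cross, zero_add] at h
    simpa [a₂] using h
  subst hv₂
  have hv₁ : v₁ = 0 := ha_nd v₁ fun w₁ => by simpa using hv (w₁, 0)
  simp [hv₁]

/-- Weak coupling limit, linear algebra version: on `V = V₁ × V₂`, if `a` is an
alternating bilinear form vanishing on cross terms whose restriction to `V₁` is
nondegenerate, and `ω` is a nondegenerate alternating bilinear form on `V₂`
(extended by zero), then `a + K·ω` is nondegenerate for all sufficiently large `K`. -/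
theorem stmt2 (V₁ V₂ : Type*)
    [AddCommGroup V₁] [Module ℝ V₁] [FiniteDimensional ℝ V₁]
    [AddCommGroup V₂] [Module ℝ V₂] [FiniteDimensional ℝ V₂]
    (a : (V₁ × V₂) →ₗ[ℝ] (V₁ × V₂) →ₗ[ℝ] ℝ)
    (ha_alt : ∀ v, a v v = 0)
    (ha_cross : ∀ (v₁ : V₁) (v₂ : V₂), a (v₁, 0) (0, v₂) = 0)
    (ha_nd : ∀ v₁ : V₁, (∀ w₁ : V₁, a (v₁, 0) (w₁, 0) = 0) → v₁ = 0)
    (ω : V₂ →ₗ[ℝ] V₂ →ₗ[ℝ] ℝ)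
    (hω_alt : ∀ v, ω v v = 0)
    (hω_nd : ∀ v₂ : V₂, (∀ w₂ : V₂, ω v₂ w₂ = 0) → v₂ = 0) :
    ∃ K₀ : ℝ, 0 < K₀ ∧ ∀ K : ℝ, K₀ ≤ K →
      ∀ v : V₁ × V₂, (∀ w : V₁ × V₂, a v w + K * ω v.2 w.2 = 0) → v = 0 :=
  stmt2_general V₁ V₂ a ha_cross ha_nd ω hω_nd
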